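/- If G is a planar graph and x, w are two vertices of G, then the subgraph induced by the common neighborhood N(x) ∩ N(w) contains no vertex of degree 3 or more (i.e., it is K_{1,3}-free), and hence every component of it is a path or a cycle. -/

import Mathlib

open SimpleGraph Filter

set_option linter.unusedVariables false

/-- The join of two graphs: disjoint union plus all edges between the two vertex sets. -/
def gjoin {α β : Type*} (G : SimpleGraph α) (H : SimpleGraph β) : SimpleGraph (α ⊕ β) where
  Adj x y :=
    match x, y with
    | Sum.inl a, Sum.inl b => G.Adj a b
    | Sum.inr a, Sum.inr b => H.Adj a b
    | _, _ => True
  symm := by constructor; rintro (a|a) (b|b) h <;> simp_all <;> exact h.symm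
  loopless := by constructor; rintro (a|a) h <;> exact (by simp at h : False)

lemma adjMatrix_isHermitian {V : Type*} [Fintype V] (G : SimpleGraph V)
    [DecidableRel G.Adj] : (G.adjMatrix ℝ).IsHermitian := by
  ext i j
  simp [Matrix.conjTranspose, SimpleGraph.adjMatrix, Matrix.transpose, SimpleGraph.adj_comm]

/-- The spectral radius of a finite graph: the largest eigenvalue of its adjacency matrix. -/
noncomputable def specRad {V : Type*} [Fintype V] [DecidableEq V] (G : SimpleGraph V) : ℝ :=
  letI := Classical.decRel G.Adj
  ⨆ i, (adjMatrix_isHermitian G).eigenvalues i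

/-- `G` contains a copy of `H` (a subgraph isomorphic to `H`). -/
def ContainsCopy {α β : Type*} (H : SimpleGraph α) (G : SimpleGraph β) : Prop :=
  ∃ f : H →g G, Function.Injective f

/-- A linear forest: an acyclic graph with maximum degree at most 2,
i.e. a disjoint union of paths (and isolated vertices). -/
def IsLinearForest {V : Type*} (G : SimpleGraph V) : Prop :=
  G.IsAcyclic ∧ ∀ v, (G.neighborSet v).ncard ≤ 2

/-- The graph on `m` vertices consisting of `⌊m/2⌋` disjoint edges
(plus one isolated vertex if `m` is odd). -/
def matchingGraph (m : ℕ) : SimpleGraph (Fin m) where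
  Adj i j := i ≠ j ∧ (i : ℕ) / 2 = (j : ℕ) / 2
  symm := ⟨fun i j h => ⟨h.1.symm, h.2.symm⟩⟩
  loopless := ⟨fun i h => h.1 rfl⟩

/-- `H` is a minor of `G`, witnessed by connected, pairwise disjoint branch sets. -/
def HasMinor {α β : Type*} (G : SimpleGraph α) (H : SimpleGraph β) : Prop :=
  ∃ f : β → Set α,
    (∀ w, (f w).Nonempty) ∧
    (∀ w, ((G.induce (f w)).Connected)) ∧
    (Pairwise fun w₁ w₂ => Disjoint (f w₁) (f w₂)) ∧
    (∀ w₁ w₂, H.Adj w₁ w₂ → ∃ u ∈ f w₁, ∃ v ∈ f w₂, G.Adj u v)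

/-- A graph is planar iff it has no `K₅`-minor and no `K₃,₃`-minor (Wagner's theorem). -/
def IsPlanar {α : Type*} (G : SimpleGraph α) : Prop :=
  ¬ HasMinor G (completeGraph (Fin 5)) ∧
    ¬ HasMinor G (completeBipartiteGraph (Fin 3) (Fin 3))

/-- The maximum number of edges of an `n`-vertex `H`-free linear forest. -/
noncomputable def exF {m : ℕ} (n : ℕ) (H : SimpleGraph (Fin m)) : ℕ :=
  sSup {e | ∃ G : SimpleGraph (Fin n),
    IsLinearForest G ∧ ¬ ContainsCopy H G ∧ G.edgeSet.ncard = e}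

/-- The disjoint union of paths `P_{k-1}` on `n` vertices (consecutive vertices in each
block of `k-1` are joined). -/
def unionOfPaths (k n : ℕ) : SimpleGraph (Fin n) where
  Adj i j := ((i : ℕ) + 1 = j ∨ (j : ℕ) + 1 = i) ∧ (i : ℕ) / (k - 1) = (j : ℕ) / (k - 1)
  symm := ⟨fun i j h => ⟨h.1.symm, h.2.symm⟩⟩
  loopless := ⟨fun i h => by omega⟩


lemma singleton_induce_connected {V : Type*} (G : SimpleGraph V) (u : V) :
    (G.induce {u}).Connected := by
  have hne : Nonempty ↥({u} : Set V) := ⟨⟨u, rfl⟩⟩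
  refine ⟨fun p q => ?_⟩
  have : p = q := Subtype.ext (by rw [p.2, q.2])
  exact this ▸ SimpleGraph.Reachable.refl _

lemma no_k33_aux {V : Type*} (G : SimpleGraph V)
    (hG : ¬ HasMinor G (completeBipartiteGraph (Fin 3) (Fin 3)))
    {x w v a b c : V} (hxw : x ≠ w)
    (hab : a ≠ b) (hac : a ≠ c) (hbc : b ≠ c)
    (hva : G.Adj v a) (hvb : G.Adj v b) (hvc : G.Adj v c)
    (hxv : G.Adj x v) (hxa : G.Adj x a) (hxb : G.Adj x b) (hxc : G.Adj x c)
    (hwv : G.Adj w v) (hwa : G.Adj w a) (hwb : G.Adj w b) (hwc : G.Adj w c) :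
    False := by
  apply hG
  set g : Fin 3 ⊕ Fin 3 → V := fun s =>
    match s with
    | Sum.inl 0 => x
    | Sum.inl 1 => w
    | Sum.inl 2 => v
    | Sum.inr 0 => a
    | Sum.inr 1 => b
    | Sum.inr 2 => c with hg
  refine ⟨fun s => {g s}, fun s => ⟨g s, rfl⟩,
    fun s => singleton_induce_connected G (g s), ?_, ?_⟩
  · intro s t hst
    simp only [Set.disjoint_singleton]
    rcases s with s | s <;> rcases t with t | t <;> fin_cases s <;> fin_cases t <;>
      simp only [hg] <;>
      first
      | exact absurd rfl hst
      | exact hxw | exact hxw.symm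
      | exact hxv.ne | exact hxv.ne'
      | exact hxa.ne | exact hxa.ne'
      | exact hxb.ne | exact hxb.ne'
      | exact hxc.ne | exact hxc.ne'
      | exact hwv.ne | exact hwv.ne'
      | exact hwa.ne | exact hwa.ne'
      | exact hwb.ne | exact hwb.ne'
      | exact hwc.ne | exact hwc.ne'
      | exact hva.ne | exact hva.ne'
      | exact hvb.ne | exact hvb.ne'
      | exact hvc.ne | exact hvc.ne'
      | exact hab | exact hab.symm
      | exact hac | exact hac.symm
      | exact hbc | exact hbc.symm
  · intro s t hst
    refine ⟨g s, rfl, g t, rfl, ?_⟩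
    rcases s with s | s <;> rcases t with t | t <;> fin_cases s <;> fin_cases t <;>
      simp at hst <;>
      simp only [hg] <;>
      first
      | exact hxv | exact hxv.symm
      | exact hxa | exact hxa.symm
      | exact hxb | exact hxb.symm
      | exact hxc | exact hxc.symm
      | exact hwv | exact hwv.symm
      | exact hwa | exact hwa.symm
      | exact hwb | exact hwb.symm
      | exact hwc | exact hwc.symm
      | exact hva | exact hva.symm
      | exact hvb | exact hvb.symm
      | exact hvc | exact hvc.symm

lemma no_three_common {V : Type*} (G : SimpleGraph V) (hG : IsPlanar G)
    (x w : V) (hxw : x ≠ w)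
    (v : ↥(G.neighborSet x ∩ G.neighborSet w))
    (a b c : ↥(G.neighborSet x ∩ G.neighborSet w))
    (hab : a ≠ b) (hac : a ≠ c) (hbc : b ≠ c)
    (ha : (G.induce (G.neighborSet x ∩ G.neighborSet w)).Adj v a)
    (hb : (G.induce (G.neighborSet x ∩ G.neighborSet w)).Adj v b)
    (hc : (G.induce (G.neighborSet x ∩ G.neighborSet w)).Adj v c) : False := by
  have ha' : G.Adj v.1 a.1 := ha
  have hb' : G.Adj v.1 b.1 := hb
  have hc' : G.Adj v.1 c.1 := hc
  exact no_k33_aux G hG.2 hxw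
    (fun h => hab (Subtype.ext h)) (fun h => hac (Subtype.ext h))
    (fun h => hbc (Subtype.ext h)) ha' hb' hc'
    v.2.1 a.2.1 b.2.1 c.2.1 v.2.2 a.2.2 b.2.2 c.2.2

/-- In a planar graph, the subgraph induced by the common neighborhood of two vertices
has maximum degree at most 2 (it is `K_{1,3}`-free). -/
theorem planar_common_neighborhood_max_degree_le_two {V : Type*} (G : SimpleGraph V)
    (hG : IsPlanar G) (x w : V) (hxw : x ≠ w) :
    (∀ v : ↥(G.neighborSet x ∩ G.neighborSet w),
        ((G.induce (G.neighborSet x ∩ G.neighborSet w)).neighborSet v).ncard ≤ 2) ∧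
      ¬ ContainsCopy (completeBipartiteGraph (Fin 1) (Fin 3))
          (G.induce (G.neighborSet x ∩ G.neighborSet w)) := by
  constructor
  · intro v
    by_contra h
    push_neg at h
    have h3 : 3 ≤ ((G.induce (G.neighborSet x ∩ G.neighborSet w)).neighborSet v).ncard := h
    have hfin : ((G.induce (G.neighborSet x ∩ G.neighborSet w)).neighborSet v).Finite := by
      by_contra hinf
      rw [Set.Infinite.ncard hinf] at h3
      omega
    obtain ⟨a, b, c, ha, hb, hc, hab, hac, hbc⟩ :=
      (Set.two_lt_ncard_iff hfin).mp (by omega)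
    exact no_three_common G hG x w hxw v a b c hab hac hbc ha hb hc
  · rintro ⟨f, hf⟩
    refine no_three_common G hG x w hxw (f (Sum.inl 0)) (f (Sum.inr 0)) (f (Sum.inr 1))
      (f (Sum.inr 2)) ?_ ?_ ?_ ?_ ?_ ?_
    · exact fun h => by simpa using hf h
    · exact fun h => by simpa using hf h
    · exact fun h => by simpa using hf h
    · exact f.map_adj (by simp)
    · exact f.map_adj (by simp)
    · exact f.map_adj (by simp)
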